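/- arXiv:math/0510466 — 3 statements merged into one kernel-verified Lean document; each statement's English description precedes it below -/
import Mathlib

section
/- Let F be a normal m×m complex matrix, θ an m×s complex matrix with θ*θ = I (i.e., θ is an isometry), and G an s×s complex matrix such that F*θ = θG. Then G is normal and Fθ = θG*. -/
open Matrix

lemma trace_conjTranspose_mul_self_eq_zero {m s : ℕ} (X : Matrix (Fin m) (Fin s) ℂ)
    (h : (Xᴴ * X).trace = 0) : X = 0 := by
  have key : ∑ j, ∑ i, (Complex.normSq (X i j) : ℂ) = 0 := by
    rw [← h]
    simp [trace, Matrix.mul_apply, Matrix.conjTranspose_apply, Matrix.diag,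
      Complex.normSq_eq_conj_mul_self]
  have key' : ∑ j, ∑ i, Complex.normSq (X i j) = 0 := by
    exact_mod_cast key
  ext i j
  have h1 : Complex.normSq (X i j) = 0 := by
    have := (Finset.sum_eq_zero_iff_of_nonneg (fun j _ => Finset.sum_nonneg
      (fun i _ => Complex.normSq_nonneg _))).mp key' j (Finset.mem_univ j)
    have := (Finset.sum_eq_zero_iff_of_nonneg (fun i _ =>
      Complex.normSq_nonneg (X i j))).mp this i (Finset.mem_univ i)
    exact this
  simpa using Complex.normSq_eq_zero.mp h1

/-- If `F` is a normal `m×m` matrix, `θ` an `m×s` matrix with `θ*θ = I`,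
and `G` an `s×s` matrix with `F*θ = θG`, then `G` is normal and `Fθ = θG*`. -/
theorem normal_isometry_intertwine {m s : ℕ} (hs : 1 ≤ s) (hsm : s ≤ m)
    (F : Matrix (Fin m) (Fin m) ℂ) (θ : Matrix (Fin m) (Fin s) ℂ)
    (G : Matrix (Fin s) (Fin s) ℂ)
    (hF : Fᴴ * F = F * Fᴴ)
    (hθ : θᴴ * θ = 1)
    (h : Fᴴ * θ = θ * G) :
    Gᴴ * G = G * Gᴴ ∧ F * θ = θ * Gᴴ := by
  have h2 : θᴴ * F = Gᴴ * θᴴ := by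
    have := congrArg conjTranspose h
    simpa [Matrix.conjTranspose_mul] using this
  set X : Matrix (Fin m) (Fin s) ℂ := F * θ - θ * Gᴴ with hX
  have hXX : Xᴴ * X = Gᴴ * G - G * Gᴴ := by
    have e1 : θᴴ * Fᴴ * (F * θ) = Gᴴ * G := by
      calc θᴴ * Fᴴ * (F * θ) = θᴴ * (Fᴴ * F) * θ := by simp only [Matrix.mul_assoc]
        _ = θᴴ * (F * Fᴴ) * θ := by rw [hF]
        _ = (θᴴ * F) * (Fᴴ * θ) := by simp only [Matrix.mul_assoc]
        _ = Gᴴ * θᴴ * (θ * G) := by rw [h2, h]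
        _ = Gᴴ * (θᴴ * θ) * G := by simp only [Matrix.mul_assoc]
        _ = Gᴴ * G := by rw [hθ]; simp
    have e2 : θᴴ * Fᴴ * (θ * Gᴴ) = G * Gᴴ := by
      calc θᴴ * Fᴴ * (θ * Gᴴ) = θᴴ * (Fᴴ * θ) * Gᴴ := by simp only [Matrix.mul_assoc]
        _ = θᴴ * (θ * G) * Gᴴ := by rw [h]
        _ = (θᴴ * θ) * G * Gᴴ := by simp only [Matrix.mul_assoc]
        _ = G * Gᴴ := by rw [hθ]; simp
    have e3 : G * θᴴ * (F * θ) = G * Gᴴ := by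
      calc G * θᴴ * (F * θ) = G * (θᴴ * F) * θ := by simp only [Matrix.mul_assoc]
        _ = G * (Gᴴ * θᴴ) * θ := by rw [h2]
        _ = G * Gᴴ * (θᴴ * θ) := by simp only [Matrix.mul_assoc]
        _ = G * Gᴴ := by rw [hθ]; simp
    have e4 : G * θᴴ * (θ * Gᴴ) = G * Gᴴ := by
      calc G * θᴴ * (θ * Gᴴ) = G * (θᴴ * θ) * Gᴴ := by simp only [Matrix.mul_assoc]
        _ = G * Gᴴ := by rw [hθ]; simp
    have : Xᴴ = θᴴ * Fᴴ - G * θᴴ := by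
      simp [hX, Matrix.conjTranspose_sub, Matrix.conjTranspose_mul]
    rw [this, hX, Matrix.sub_mul, Matrix.mul_sub, Matrix.mul_sub, e1, e2, e3, e4]
    abel
  have htr : (Xᴴ * X).trace = 0 := by
    rw [hXX, Matrix.trace_sub, Matrix.trace_mul_comm Gᴴ G, sub_self]
  have hX0 : X = 0 := trace_conjTranspose_mul_self_eq_zero X htr
  have h3 : F * θ = θ * Gᴴ := by
    have := hX0
    rw [hX, sub_eq_zero] at this
    exact this
  refine ⟨?_, h3⟩
  -- G = θᴴ Fᴴ θ, etc.
  have hG : Gᴴ * G = G * Gᴴ := by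
    have := hXX
    rw [hX0] at this
    simp at this
    linear_combination (norm := abel) -this
  exact hG
end

section
/- Let h, d ∈ H^∞ of the unit disc with d not identically zero, and let φ be an inner function such that for every n ∈ ℕ the function φ^n divides h^n d in H^∞ (i.e., h^n d / φ^n ∈ H^∞). Then φ divides h in H^∞. -/
open Complex Filter Metric
open scoped Topology

/-- `f` is a bounded analytic function on the open unit disc. -/
def IsHinf (f : ℂ → ℂ) : Prop :=
  DifferentiableOn ℂ f (ball (0 : ℂ) 1) ∧ ∃ C : ℝ, ∀ z ∈ ball (0 : ℂ) 1, ‖f z‖ ≤ C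

/-- `φ` is an inner function: bounded analytic on the disc with unimodular radial boundary
values a.e. -/
def IsInnerFn (φ : ℂ → ℂ) : Prop :=
  IsHinf φ ∧ ∀ᵐ θ : ℝ,
    Tendsto (fun r : ℝ => ‖φ ((r : ℂ) * Complex.exp ((θ : ℂ) * Complex.I))‖)
      (𝓝[<] (1 : ℝ)) (𝓝 1)

/-!
Since `|φ| = 1` a.e. on the circle, dividing by `φ ^ n` does not increase the sup norm: a bounded
holomorphic function on the disc is dominated by the limsup of its radial boundary values (Poisson
representation on smaller circles plus reverse Fatou). Hence
`|h| ^ n |d| ≤ (‖h‖∞ |φ|) ^ n ‖d‖∞` for every `n`, so taking `n`-th roots `|h| ≤ ‖h‖∞ |φ|` off the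
zeros of `d`, and by continuity everywhere. Then `h / φ` is bounded near the isolated zeros of `φ`,
which are therefore removable singularities.
-/

open MeasureTheory Set Real
open scoped ENNReal

lemma ENNReal.limsup_mul_le_of_tendsto {α : Type*} {l : Filter α} [l.NeBot]
    {a b : α → ℝ≥0∞} {x B : ℝ≥0∞} (ha : Tendsto a l (𝓝 x)) (hx : x ≠ ∞)
    (hb : ∀ᶠ i in l, b i ≤ B) (hB : B ≠ ∞) : limsup (a * b) l ≤ x * limsup b l :=
  ha.limsup_eq ▸ ENNReal.limsup_mul_le'
    (Or.inr (ne_top_of_le_ne_top hB (limsup_le_of_le (by isBoundedDefault) hb)))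
    (Or.inl (ha.limsup_eq ▸ hx))

lemma ENNReal.limsup_le_of_mul_le_of_tendsto_one {α : Type*} {l : Filter α} [l.NeBot]
    {a b : α → ℝ≥0∞} {K : ℝ≥0∞} (ha : Tendsto a l (𝓝 1)) (hab : ∀ᶠ x in l, a x * b x ≤ K) :
    limsup b l ≤ K :=
  calc limsup b l = limsup b l * liminf a l := by rw [ha.liminf_eq, mul_one]
    _ ≤ limsup (b * a) l := ENNReal.le_limsup_mul
    _ ≤ K := limsup_le_of_le (by isBoundedDefault) (hab.mono fun x hx => by
        rwa [Pi.mul_apply, mul_comm])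

lemma circleMap_mem_ball_zero_one {r : ℝ} (hr : r ∈ Ioo (-1) 1) (θ : ℝ) :
    circleMap 0 r θ ∈ ball (0 : ℂ) 1 := by
  rw [mem_ball_zero_iff, norm_circleMap_zero, abs_lt]
  exact hr

section PoissonKernel

variable {c w ζ : ℂ} {R : ℝ}

lemma poissonKernel_nonneg (h : ‖w - c‖ ≤ ‖ζ - c‖) : 0 ≤ poissonKernel c w ζ :=
  div_nonneg (sub_nonneg.2 (pow_le_pow_left₀ (norm_nonneg _) h 2)) (sq_nonneg _)

lemma poissonKernel_le (hζ : ζ ∈ sphere c R) (hw : w ∈ ball c R) :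
    poissonKernel c w ζ ≤ (R + ‖w - c‖) / (R - ‖w - c‖) := by
  simpa [poissonKernel_eq_re_herglotzRieszKernel, herglotzRieszKernel_def]
    using re_herglotzRieszKernel_le hζ hw

lemma continuousAt_poissonKernel (h : ζ ≠ w) : ContinuousAt (poissonKernel c w) ζ := by
  have : ‖ζ - c - (w - c)‖ ^ 2 ≠ 0 := by simpa [sub_eq_zero] using h
  unfold poissonKernel
  fun_prop (disch := exact this)

lemma continuous_poissonKernel_circleMap (hw : w ∈ ball c R) :
    Continuous fun θ => poissonKernel c w (circleMap c R θ) :=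
  continuous_iff_continuousAt.2 fun θ =>
    (continuousAt_poissonKernel (circleMap_ne_mem_ball hw θ)).comp
      (continuous_circleMap c R).continuousAt

lemma poissonKernel_circleMap_nonneg (hw : w ∈ ball c R) (θ : ℝ) :
    0 ≤ poissonKernel c w (circleMap c R θ) := by
  apply poissonKernel_nonneg
  rw [mem_ball_iff_norm] at hw
  simpa using hw.le.trans (le_abs_self R)

lemma lintegral_poissonKernel_circleMap (hw : w ∈ ball c R) :
    ∫⁻ θ in Ioc 0 (2 * π), ENNReal.ofReal (poissonKernel c w (circleMap c R θ)) =
      ENNReal.ofReal (2 * π) := by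
  have h := InnerProductSpace.HarmonicOnNhd.circleAverage_poissonKernel_smul
    (f := fun _ => (1 : ℝ)) (InnerProductSpace.harmonicOnNhd_const 1) hw
  rw [circleAverage_def, inv_smul_eq_iff₀ two_pi_pos.ne',
    intervalIntegral.integral_of_le two_pi_pos.le] at h
  simp only [Pi.smul_apply', smul_eq_mul, mul_one] at h
  rw [← ofReal_integral_eq_lintegral_ofReal
    (continuous_poissonKernel_circleMap hw).integrableOn_Ioc
    (ae_of_all _ (poissonKernel_circleMap_nonneg hw)), h]

lemma DiffContOnCl.ofReal_two_pi_mul_enorm_le_lintegral_poissonKernel {E : Type*}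
    [NormedAddCommGroup E] [NormedSpace ℂ E] [CompleteSpace E] {F : ℂ → E}
    (hF : DiffContOnCl ℂ F (ball c R)) (hw : w ∈ ball c R) :
    ENNReal.ofReal (2 * π) * ‖F w‖ₑ ≤ ∫⁻ θ in Ioc 0 (2 * π),
      ENNReal.ofReal (poissonKernel c w (circleMap c R θ)) * ‖F (circleMap c R θ)‖ₑ := by
  have h := hF.circleAverage_poissonKernel_smul hw
  rw [circleAverage_def, inv_smul_eq_iff₀ two_pi_pos.ne',
    intervalIntegral.integral_of_le two_pi_pos.le] at h
  calc ENNReal.ofReal (2 * π) * ‖F w‖ₑ = ‖(2 * π) • F w‖ₑ := by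
        rw [enorm_smul, Real.enorm_of_nonneg two_pi_pos.le]
    _ ≤ _ := h ▸ enorm_integral_le_lintegral_enorm _
    _ = _ := by
        simp only [Pi.smul_apply', enorm_smul,
          Real.enorm_of_nonneg (poissonKernel_circleMap_nonneg hw _)]

lemma poissonKernel_circleMap_le_of_mem_Ioo {r : ℝ} (hr : r ∈ Ioo ((1 + ‖w‖) / 2) 1)
    (θ : ℝ) : poissonKernel 0 w (circleMap 0 r θ) ≤ 4 / (1 - ‖w‖) := by
  obtain ⟨hr₁, hr₂⟩ := hr
  have hw : w ∈ ball (0 : ℂ) r := by rw [mem_ball_zero_iff]; linarith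
  refine (poissonKernel_le (circleMap_mem_sphere 0 (by linarith [norm_nonneg w]) θ) hw).trans ?_
  rw [sub_zero, div_le_div_iff₀ (by linarith) (by linarith)]
  nlinarith [norm_nonneg w]

lemma tendsto_poissonKernel_circleMap {ι : Type*} {l : Filter ι} {r : ι → ℝ}
    (hr : Tendsto r l (𝓝 R)) (hw : w ∈ ball 0 R) (θ : ℝ) :
    Tendsto (fun i => poissonKernel 0 w (circleMap 0 (r i) θ)) l
      (𝓝 (poissonKernel 0 w (circleMap 0 R θ))) := by
  refine (continuousAt_poissonKernel (circleMap_ne_mem_ball hw θ)).tendsto.comp ?_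
  simpa [circleMap_zero] using ((continuous_ofReal.tendsto R).comp hr).mul_const (exp (θ * I))

end PoissonKernel

/-- Reverse Fatou applies since radii `r k > (1 + ‖z‖) / 2` keep the Poisson kernels uniformly
bounded. -/
lemma limsup_lintegral_poissonKernel_mul_le {z : ℂ} (hz : z ∈ ball (0 : ℂ) 1) {r : ℕ → ℝ}
    (hr_mem : ∀ k, r k ∈ Ioo ((1 + ‖z‖) / 2) 1) (hr_lim : Tendsto r atTop (𝓝 1))
    {f : ℂ → ℝ≥0∞} (hf_meas : ∀ k, Measurable fun θ => f (circleMap 0 (r k) θ)) {B : ℝ≥0∞}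
    (hB : B ≠ ∞) (hf_le : ∀ w ∈ ball (0 : ℂ) 1, f w ≤ B) {A : ℝ≥0∞}
    (hA : ∀ᵐ θ : ℝ, limsup (fun s : ℝ => f (circleMap 0 s θ)) (𝓝[<] 1) ≤ A) :
    limsup (fun k => ∫⁻ θ in Ioc 0 (2 * π),
      ENNReal.ofReal (poissonKernel 0 z (circleMap 0 (r k) θ)) * f (circleMap 0 (r k) θ))
      atTop ≤ ENNReal.ofReal (2 * π) * A := by
  set P : ℝ → ℝ → ℝ≥0∞ := fun s θ => ENNReal.ofReal (poissonKernel 0 z (circleMap 0 s θ))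
  have hz_r : ∀ k, z ∈ ball (0 : ℂ) (r k) := fun k => by
    rw [mem_ball_zero_iff]; linarith [(hr_mem k).1, mem_ball_zero_iff.1 hz]
  have hf_le' : ∀ k θ, f (circleMap 0 (r k) θ) ≤ B := fun k θ =>
    hf_le _ (circleMap_mem_ball_zero_one ⟨by linarith [(hr_mem k).1, norm_nonneg z],
      (hr_mem k).2⟩ θ)
  have hG_le : ∀ k θ, P (r k) θ * f (circleMap 0 (r k) θ) ≤ ENNReal.ofReal (4 / (1 - ‖z‖)) * B :=
    fun k θ => mul_le_mul' (ENNReal.ofReal_le_ofReal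
      (poissonKernel_circleMap_le_of_mem_Ioo (hr_mem k) θ)) (hf_le' k θ)
  have hbound_fin : ∫⁻ _ in Ioc 0 (2 * π), ENNReal.ofReal (4 / (1 - ‖z‖)) * B ≠ ∞ := by
    simp [Real.volume_Ioc, ENNReal.mul_eq_top, hB]
  have hlimsup : ∀ᵐ θ ∂(volume.restrict (Ioc 0 (2 * π))),
      limsup (fun k => P (r k) θ * f (circleMap 0 (r k) θ)) atTop ≤ P 1 θ * A := by
    filter_upwards [ae_restrict_of_ae hA] with θ hθ
    refine (ENNReal.limsup_mul_le_of_tendsto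
      (ENNReal.tendsto_ofReal (tendsto_poissonKernel_circleMap hr_lim hz θ))
      ENNReal.ofReal_ne_top (Eventually.of_forall fun k => hf_le' k θ) hB).trans ?_
    gcongr
    exact ((tendsto_nhdsWithin_of_tendsto_nhds_of_eventually_within r hr_lim
      (Eventually.of_forall fun k => (hr_mem k).2)).limsup_comp_le_limsup
        (u := fun s => f (circleMap 0 s θ))).trans hθ
  calc _ ≤ ∫⁻ θ in Ioc 0 (2 * π), limsup (fun k => P (r k) θ * f (circleMap 0 (r k) θ)) atTop :=
        limsup_lintegral_le _
          (fun k => (continuous_poissonKernel_circleMap (hz_r k)).measurable.ennreal_ofReal.mul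
            (hf_meas k))
          (fun k => ae_of_all _ (hG_le k)) hbound_fin
    _ ≤ ∫⁻ θ in Ioc 0 (2 * π), P 1 θ * A := lintegral_mono_ae hlimsup
    _ = ENNReal.ofReal (2 * π) * A := by
        rw [lintegral_mul_const _
          (continuous_poissonKernel_circleMap hz).measurable.ennreal_ofReal,
          lintegral_poissonKernel_circleMap hz]

theorem enorm_le_of_limsup_enorm_circleMap_le {E : Type*} [NormedAddCommGroup E]
    [NormedSpace ℂ E] [CompleteSpace E] {F : ℂ → E} (hF : DifferentiableOn ℂ F (ball 0 1))
    {C : ℝ} (hC : ∀ z ∈ ball (0 : ℂ) 1, ‖F z‖ ≤ C) {A : ℝ≥0∞}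
    (hA : ∀ᵐ θ : ℝ, limsup (fun r : ℝ => ‖F (circleMap 0 r θ)‖ₑ) (𝓝[<] 1) ≤ A)
    {z : ℂ} (hz : z ∈ ball (0 : ℂ) 1) : ‖F z‖ₑ ≤ A := by
  obtain ⟨r, -, hr_mem, hr_lim⟩ := exists_seq_strictMono_tendsto'
    (show (1 + ‖z‖) / 2 < 1 by linarith [mem_ball_zero_iff.1 hz])
  have hr_pos : ∀ k, 0 < r k := fun k => by linarith [(hr_mem k).1, norm_nonneg z]
  have hz_r : ∀ k, z ∈ ball (0 : ℂ) (r k) := fun k => by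
    rw [mem_ball_zero_iff]; linarith [(hr_mem k).1, mem_ball_zero_iff.1 hz]
  have hF_meas : ∀ k, Measurable fun θ => ‖F (circleMap 0 (r k) θ)‖ₑ := fun k =>
    (hF.continuousOn.comp_continuous (continuous_circleMap 0 (r k)) fun θ =>
      circleMap_mem_ball_zero_one ⟨by linarith [hr_pos k], (hr_mem k).2⟩ θ).enorm.measurable
  have hF_le : ∀ w ∈ ball (0 : ℂ) 1, ‖F w‖ₑ ≤ ENNReal.ofReal C := fun w hw => by
    rw [← ofReal_norm]; exact ENNReal.ofReal_le_ofReal (hC w hw)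
  have hpoisson : ∀ k, ENNReal.ofReal (2 * π) * ‖F z‖ₑ ≤ ∫⁻ θ in Ioc 0 (2 * π),
      ENNReal.ofReal (poissonKernel 0 z (circleMap 0 (r k) θ)) * ‖F (circleMap 0 (r k) θ)‖ₑ :=
    fun k => (hF.mono (closure_ball (0 : ℂ) (hr_pos k).ne' ▸ closedBall_subset_ball
      (hr_mem k).2)).diffContOnCl.ofReal_two_pi_mul_enorm_le_lintegral_poissonKernel (hz_r k)
  have key : ENNReal.ofReal (2 * π) * ‖F z‖ₑ ≤ ENNReal.ofReal (2 * π) * A :=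
    (le_limsup_of_frequently_le (Frequently.of_forall hpoisson)).trans
      (limsup_lintegral_poissonKernel_mul_le hz hr_mem hr_lim hF_meas ENNReal.ofReal_ne_top
        hF_le hA)
  exact (ENNReal.mul_le_mul_iff_right (by simp [pi_pos]) ENNReal.ofReal_ne_top).1 key

lemma IsHinf.pow {f : ℂ → ℂ} (hf : IsHinf f) (n : ℕ) : IsHinf (f ^ n) := by
  obtain ⟨hdiff, C, hC⟩ := hf
  exact ⟨hdiff.pow n, C ^ n, fun z hz => by
    simpa using pow_le_pow_left₀ (norm_nonneg _) (hC z hz) n⟩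

namespace IsInnerFn

variable {φ : ℂ → ℂ}

lemma pow (hφ : IsInnerFn φ) (n : ℕ) : IsInnerFn (φ ^ n) :=
  ⟨hφ.1.pow n, hφ.2.mono fun θ hθ => by simpa using hθ.pow n⟩

lemma exists_ne_zero (hφ : IsInnerFn φ) : ∃ z ∈ ball (0 : ℂ) 1, φ z ≠ 0 := by
  obtain ⟨θ, hθ⟩ := hφ.2.exists
  obtain ⟨r, hr_pos, hr⟩ := ((hθ.eventually (lt_mem_nhds one_pos)).and
    (Ioo_mem_nhdsLT (show (-1 : ℝ) < 1 by norm_num))).exists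
  refine ⟨circleMap 0 r θ, circleMap_mem_ball_zero_one hr θ, ?_⟩
  rw [circleMap_zero]
  exact norm_pos_iff.1 hr_pos

lemma norm_le_of_norm_mul_le (hφ : IsInnerFn φ) {q : ℂ → ℂ} (hq : IsHinf q) {K : ℝ}
    (hK : ∀ z ∈ ball (0 : ℂ) 1, ‖φ z * q z‖ ≤ K) {z : ℂ} (hz : z ∈ ball (0 : ℂ) 1) :
    ‖q z‖ ≤ K := by
  have hK0 : 0 ≤ K := (norm_nonneg _).trans (hK 0 (mem_ball_self one_pos))
  obtain ⟨hq_diff, C, hC⟩ := hq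
  rw [← ENNReal.ofReal_le_ofReal_iff hK0, ofReal_norm]
  refine enorm_le_of_limsup_enorm_circleMap_le hq_diff hC ?_ hz
  filter_upwards [hφ.2] with θ hθ
  refine ENNReal.limsup_le_of_mul_le_of_tendsto_one
    (a := fun r : ℝ => ‖φ (circleMap 0 r θ)‖ₑ) ?_ ?_
  · simpa [circleMap_zero, ← ofReal_norm] using ENNReal.tendsto_ofReal hθ
  · filter_upwards [Ioo_mem_nhdsLT (show (-1 : ℝ) < 1 by norm_num)] with r hr
    rw [← enorm_mul, ← ofReal_norm]
    exact ENNReal.ofReal_le_ofReal (hK _ (circleMap_mem_ball_zero_one hr θ))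

lemma norm_pow_mul_norm_le (hφ : IsInnerFn φ) {h d q : ℂ → ℂ} (hq : IsHinf q) {M C : ℝ}
    (hM0 : 0 ≤ M) (hM : ∀ z ∈ ball (0 : ℂ) 1, ‖h z‖ ≤ M) (hC : ∀ z ∈ ball (0 : ℂ) 1, ‖d z‖ ≤ C)
    {n : ℕ} (hq_eq : ∀ z ∈ ball (0 : ℂ) 1, h z ^ n * d z = φ z ^ n * q z) {z : ℂ}
    (hz : z ∈ ball (0 : ℂ) 1) : ‖h z‖ ^ n * ‖d z‖ ≤ (M * ‖φ z‖) ^ n * C := by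
  have hq_le : ‖q z‖ ≤ M ^ n * C := (hφ.pow n).norm_le_of_norm_mul_le hq (fun w hw => by
    rw [Pi.pow_apply, ← hq_eq w hw, norm_mul, norm_pow]
    exact mul_le_mul (pow_le_pow_left₀ (norm_nonneg _) (hM w hw) n) (hC w hw)
      (norm_nonneg _) (pow_nonneg hM0 n)) hz
  calc ‖h z‖ ^ n * ‖d z‖ = ‖φ z‖ ^ n * ‖q z‖ := by
        rw [← norm_pow, ← norm_pow, ← norm_mul, ← norm_mul, hq_eq z hz]
    _ ≤ ‖φ z‖ ^ n * (M ^ n * C) := by gcongr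
    _ = (M * ‖φ z‖) ^ n * C := by ring

end IsInnerFn

lemma le_of_forall_pow_mul_le {a b c K : ℝ} (hb : 0 < b) (hc : 0 ≤ c)
    (h : ∀ n : ℕ, a ^ n * b ≤ c ^ n * K) : a ≤ c := by
  by_contra! hca
  have ha : 0 < a := hc.trans_lt hca
  have hlim : Tendsto (fun n : ℕ => (c / a) ^ n * K) atTop (𝓝 (0 * K)) :=
    (tendsto_pow_atTop_nhds_zero_of_lt_one (div_nonneg hc ha.le)
      ((div_lt_one ha).2 hca)).mul_const K
  have : b ≤ 0 * K := ge_of_tendsto' hlim fun n => by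
    rw [div_pow, div_mul_eq_mul_div, le_div_iff₀ (pow_pos ha n)]
    linarith [h n]
  linarith

lemma AnalyticOnNhd.eventually_ne_zero_nhdsNE {𝕜 E : Type*} [NontriviallyNormedField 𝕜]
    [NormedAddCommGroup E] [NormedSpace 𝕜 E] {f : 𝕜 → E} {U : Set 𝕜}
    (hf : AnalyticOnNhd 𝕜 f U) (hU : IsPreconnected U) {z₀ z : 𝕜} (hz₀ : z₀ ∈ U)
    (hfz₀ : f z₀ ≠ 0) (hz : z ∈ U) : ∀ᶠ w in 𝓝[≠] z, f w ≠ 0 :=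
  not_frequently.1 fun h =>
    hfz₀ (hf.eqOn_zero_of_preconnected_of_frequently_eq_zero hU hz (by simpa using h) hz₀)

lemma DifferentiableOn.eventually_mem_and_ne_zero_nhdsNE {U : Set ℂ} {d : ℂ → ℂ}
    (hd : DifferentiableOn ℂ d U) (hU : IsOpen U) (hUc : IsPreconnected U) {z₀ z : ℂ}
    (hz₀ : z₀ ∈ U) (hdz₀ : d z₀ ≠ 0) (hz : z ∈ U) : ∀ᶠ w in 𝓝[≠] z, w ∈ U ∧ d w ≠ 0 :=
  (eventually_nhdsWithin_of_eventually_nhds (hU.mem_nhds hz)).and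
    ((hd.analyticOnNhd hU).eventually_ne_zero_nhdsNE hUc hz₀ hdz₀ hz)

lemma le_of_forall_le_of_ne_zero {U : Set ℂ} (hU : IsOpen U) (hUc : IsPreconnected U)
    {d : ℂ → ℂ} (hd : DifferentiableOn ℂ d U) {z₀ : ℂ} (hz₀ : z₀ ∈ U) (hdz₀ : d z₀ ≠ 0)
    {u v : ℂ → ℝ} (hu : ContinuousOn u U) (hv : ContinuousOn v U)
    (huv : ∀ z ∈ U, d z ≠ 0 → u z ≤ v z) {z : ℂ} (hz : z ∈ U) : u z ≤ v z :=
  le_of_tendsto_of_tendsto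
    ((hu.continuousAt (hU.mem_nhds hz)).tendsto.mono_left nhdsWithin_le_nhds)
    ((hv.continuousAt (hU.mem_nhds hz)).tendsto.mono_left nhdsWithin_le_nhds)
    ((hd.eventually_mem_and_ne_zero_nhdsNE hU hUc hz₀ hdz₀ hz).mono fun w hw => huv w hw.1 hw.2)

lemma limUnder_nhdsNE_eq {E : Type*} [NormedAddCommGroup E] {g : ℂ → E} {w : ℂ}
    (hg : ContinuousAt g w) : limUnder (𝓝[≠] w) g = g w :=
  (hg.tendsto.mono_left nhdsWithin_le_nhds).limUnder_eq

lemma differentiableAt_limUnder_nhdsNE {E : Type*} [NormedAddCommGroup E] [NormedSpace ℂ E]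
    [CompleteSpace E] {g : ℂ → E} {z : ℂ} {M : ℝ}
    (hg : ∀ᶠ w in 𝓝[≠] z, DifferentiableAt ℂ g w ∧ ‖g w‖ ≤ M) :
    DifferentiableAt ℂ (fun w => limUnder (𝓝[≠] w) g) z := by
  obtain ⟨V, hV, hVo, hzV⟩ := _root_.mem_nhds_iff.1 (eventually_nhdsWithin_iff.1 hg)
  have hdiff : DifferentiableOn ℂ g (V \ {z}) := fun w hw =>
    (hV hw.1 hw.2).1.differentiableWithinAt
  have hbdd : BddAbove (norm ∘ g '' (V \ {z})) :=
    ⟨M, forall_mem_image.2 fun w hw => (hV hw.1 hw.2).2⟩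
  refine ((Complex.differentiableOn_update_limUnder_of_bddAbove (hVo.mem_nhds hzV) hdiff
    hbdd).differentiableAt (hVo.mem_nhds hzV)).congr_of_eventuallyEq ?_
  filter_upwards [hVo.mem_nhds hzV] with w hw
  rcases eq_or_ne w z with rfl | hwz
  · rw [Function.update_self]
  · rw [Function.update_of_ne hwz]
    exact limUnder_nhdsNE_eq (hV hw hwz).1.continuousAt

lemma exists_differentiableOn_eq_mul_of_norm_le {U : Set ℂ} (hU : IsOpen U)
    (hUc : IsPreconnected U) {h φ : ℂ → ℂ} (hh : DifferentiableOn ℂ h U)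
    (hφ : DifferentiableOn ℂ φ U) {z₀ : ℂ} (hz₀ : z₀ ∈ U) (hφz₀ : φ z₀ ≠ 0) {M : ℝ}
    (hM : ∀ z ∈ U, ‖h z‖ ≤ M * ‖φ z‖) :
    ∃ q : ℂ → ℂ, DifferentiableOn ℂ q U ∧ (∀ z ∈ U, ‖q z‖ ≤ M) ∧
      ∀ z ∈ U, h z = φ z * q z := by
  set g : ℂ → ℂ := fun w => h w / φ w
  have hg_diff : ∀ w ∈ U, φ w ≠ 0 → DifferentiableAt ℂ g w := fun w hw hφw =>
    (hh.differentiableAt (hU.mem_nhds hw)).div (hφ.differentiableAt (hU.mem_nhds hw)) hφw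
  have hg_le : ∀ w ∈ U, φ w ≠ 0 → ‖g w‖ ≤ M := fun w hw hφw => by
    rw [norm_div, div_le_iff₀ (norm_pos_iff.2 hφw)]
    exact hM w hw
  have hq_eq : ∀ w ∈ U, φ w ≠ 0 → limUnder (𝓝[≠] w) g = g w := fun w hw hφw =>
    limUnder_nhdsNE_eq (hg_diff w hw hφw).continuousAt
  have hq_diff : DifferentiableOn ℂ (fun w => limUnder (𝓝[≠] w) g) U := fun z hz =>
    (differentiableAt_limUnder_nhdsNE (M := M)
      ((hφ.eventually_mem_and_ne_zero_nhdsNE hU hUc hz₀ hφz₀ hz).mono fun w hw =>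
        ⟨hg_diff w hw.1 hw.2, hg_le w hw.1 hw.2⟩)).differentiableWithinAt
  refine ⟨_, hq_diff, fun z hz => ?_, fun z hz => ?_⟩
  · exact le_of_forall_le_of_ne_zero hU hUc hφ hz₀ hφz₀ hq_diff.continuousOn.norm
      continuousOn_const (fun w hw hφw => hq_eq w hw hφw ▸ hg_le w hw hφw) hz
  · rcases eq_or_ne (φ z) 0 with hφz | hφz
    · simpa [hφz] using hM z hz
    · rw [hq_eq z hz hφz, mul_div_cancel₀ _ hφz]

/-- Let `h, d ∈ H^∞` with `d ≢ 0` and `φ` inner, such that for every `n`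
the inner function `φ^n` divides `h^n d` in `H^∞`. Then `φ` divides `h` in `H^∞`. -/
theorem inner_divides_of_divides_powers (h d φ : ℂ → ℂ)
    (hh : IsHinf h) (hd : IsHinf d)
    (hd0 : ∃ z ∈ ball (0 : ℂ) 1, d z ≠ 0)
    (hφ : IsInnerFn φ)
    (hdiv : ∀ n : ℕ, ∃ q : ℂ → ℂ, IsHinf q ∧
      ∀ z ∈ ball (0 : ℂ) 1, h z ^ n * d z = φ z ^ n * q z) :
    ∃ q : ℂ → ℂ, IsHinf q ∧ ∀ z ∈ ball (0 : ℂ) 1, h z = φ z * q z := by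
  obtain ⟨hh_diff, M, hM⟩ := hh
  obtain ⟨hd_diff, C, hC⟩ := hd
  obtain ⟨z₀, hz₀, hdz₀⟩ := hd0
  have hM0 : 0 ≤ M := (norm_nonneg _).trans (hM 0 (mem_ball_self one_pos))
  have hpow : ∀ n : ℕ, ∀ z ∈ ball (0 : ℂ) 1, ‖h z‖ ^ n * ‖d z‖ ≤ (M * ‖φ z‖) ^ n * C :=
    fun n z hz => by
      obtain ⟨q, hq, hq_eq⟩ := hdiv n
      exact hφ.norm_pow_mul_norm_le hq hM0 hM hC hq_eq hz
  have hle : ∀ z ∈ ball (0 : ℂ) 1, ‖h z‖ ≤ M * ‖φ z‖ := fun z hz =>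
    le_of_forall_le_of_ne_zero isOpen_ball (convex_ball 0 1).isPreconnected hd_diff hz₀ hdz₀
      hh_diff.continuousOn.norm (continuousOn_const.mul hφ.1.1.continuousOn.norm)
      (fun w hw hdw => le_of_forall_pow_mul_le (norm_pos_iff.2 hdw)
        (mul_nonneg hM0 (norm_nonneg _)) (hpow · w hw)) hz
  obtain ⟨w₀, hw₀, hφw₀⟩ := hφ.exists_ne_zero
  obtain ⟨q, hq_diff, hq_le, hq_eq⟩ := exists_differentiableOn_eq_mul_of_norm_le isOpen_ball
    (convex_ball 0 1).isPreconnected hh_diff hφ.1.1 hw₀ hφw₀ hle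
  exact ⟨q, ⟨hq_diff, M, hq_le⟩, hq_eq⟩
end

section
/- Let F(t) = t + β/(t − a) with |a| > 1 and β ≠ 0, and let F_*(t) = conj(F(1/conj(t))) = t^{-1} + conj(β) t /(1 − conj(a) t). Then the kernel of the Hankel operator Γ_{F_*} on the Hardy space H² equals {x ∈ H² : x(0) = 0 and x(1/conj(a)) = 0}; equivalently, Ker Γ_{F_*} = α H² where α(t) = t · (t − 1/conj(a))/(1 − (1/a) t) is a Blaschke product of degree 2. -/
open MeasureTheory Complex AddCircle
open scoped ComplexInnerProductSpace Real

noncomputable section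

local instance : Fact ((0:ℝ) < 2 * Real.pi) := ⟨by positivity⟩

/-- The Hilbert space `L²(𝕋)`, realized over the circle of circumference `2π`. -/
abbrev L2S := Lp ℂ 2 (haarAddCircle : Measure (AddCircle (2 * Real.pi)))

/-- The scalar Hardy space `H²`. -/
def Hardy1 : Set L2S := {f | ∀ n : ℤ, n < 0 → fourierCoeff (⇑f) n = 0}

/-- The boundary symbol `F_*(t) = t⁻¹ + conj(β)·t/(1 − conj(a)·t)`, where the circle point
is `t = e^{iθ} = fourier 1 θ` so `t⁻¹ = fourier (−1) θ`. -/
def Fstar (a β : ℂ) (θ : AddCircle (2 * Real.pi)) : ℂ :=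
  fourier (-1) θ + starRingEnd ℂ β * fourier 1 θ / (1 - starRingEnd ℂ a * fourier 1 θ)

/-!
Write `F_* = t⁻¹ + r` with `r(t) = b t / (1 - c t)`, `b = conj β`, `c = conj a`. The `n`-th
Fourier coefficient of `F_* x` is then `x̂(n+1) + u(n)`, where `u` are the Fourier coefficients
of `r x`. Since `(1 - c t) r = b t`, they satisfy `u(n) = c u(n-1) + b x̂(n-1)`. Going down,
`x ∈ H²` forces `u(-m) = u(0) c⁻ᵐ`; going up, `u` is bounded and `|c| > 1`, which forces
`u(0) = -b c⁻¹ Σ x̂(n) c⁻ⁿ = -b c⁻¹ x(1/c)`. Hence `F_* x ∈ H²`, i.e. `Γ_{F_*} x = 0`, exactly when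
`x̂(0) + u(0) c⁻¹ = 0` and `u(0) = 0`, that is, when `x(0) = 0` and `x(1/c) = 0`.
-/

open Filter Topology

theorem sub_eq_zero_iff_mem_of_orthogonal {𝕜 E : Type*} [RCLike 𝕜] [NormedAddCommGroup E]
    [InnerProductSpace 𝕜 E] {K : Set E} (hK : ∀ f ∈ K, ∀ g ∈ K, f - g ∈ K) {f p : E}
    (hp : p ∈ K) (horth : ∀ g ∈ K, inner 𝕜 (f - p) g = 0) : f - p = 0 ↔ f ∈ K := by
  refine ⟨fun h => ?_, fun hf => inner_self_eq_zero.mp (horth _ (hK f hf p hp))⟩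
  rwa [sub_eq_zero.mp h]

theorem Hardy1.sub_mem : ∀ f ∈ Hardy1, ∀ g ∈ Hardy1, f - g ∈ Hardy1 := by
  intro f hf g hg n hn
  rw [← fourierBasis_repr, map_sub, lp.coeFn_sub, Pi.sub_apply, fourierBasis_repr,
    fourierBasis_repr, hf n hn, hg n hn, sub_zero]

section Recurrence

variable {u v : ℤ → ℂ} {b c : ℂ}

theorem apply_neg_eq_of_recurrence (hrec : ∀ n, u n = c * u (n - 1) + b * v (n - 1))
    (hc : c ≠ 0) (hv : ∀ n < 0, v n = 0) (m : ℕ) : u (-m) = u 0 * c⁻¹ ^ m := by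
  induction m with
  | zero => simp
  | succ k ih =>
    have hr := hrec (-(k : ℤ))
    rw [hv (-(k : ℤ) - 1) (by omega), mul_zero, add_zero] at hr
    rw [Nat.cast_succ, neg_add, ← sub_eq_add_neg, pow_succ, ← mul_assoc, ← ih, hr]
    field_simp

theorem mul_inv_pow_eq_of_recurrence (hrec : ∀ n, u n = c * u (n - 1) + b * v (n - 1))
    (hc : c ≠ 0) (n : ℕ) :
    u n * c⁻¹ ^ n = u 0 + b * ∑ j ∈ Finset.range n, v j * c⁻¹ ^ (j + 1) := by
  induction n with
  | zero => simp
  | succ k ih =>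
    rw [Finset.sum_range_succ, mul_add, ← add_assoc, ← ih, Nat.cast_succ, hrec,
      add_sub_cancel_right, pow_succ]
    linear_combination (u k * c⁻¹ ^ k) * mul_inv_cancel₀ hc

theorem apply_zero_eq_of_bounded_recurrence (hrec : ∀ n, u n = c * u (n - 1) + b * v (n - 1))
    (hc : 1 < ‖c‖) {C D : ℝ} (hu : ∀ n, ‖u n‖ ≤ C) (hv : ∀ n, ‖v n‖ ≤ D) :
    u 0 = -(b * c⁻¹ * ∑' n : ℕ, v n * c⁻¹ ^ n) := by
  have hc0 : c ≠ 0 := norm_pos_iff.mp (one_pos.trans hc)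
  have hw : ‖c⁻¹‖ < 1 := by rw [norm_inv]; exact inv_lt_one_of_one_lt₀ hc
  have hsummable : Summable fun n : ℕ => v n * c⁻¹ ^ n :=
    .of_norm_bounded ((summable_geometric_of_lt_one (norm_nonneg _) hw).mul_left D) fun n => by
      rw [norm_mul, norm_pow]; exact mul_le_mul_of_nonneg_right (hv n) (by positivity)
  have hsum : HasSum (fun j : ℕ => v j * c⁻¹ ^ (j + 1)) (c⁻¹ * ∑' n : ℕ, v n * c⁻¹ ^ n) := by
    have hshift : (fun j : ℕ => v j * c⁻¹ ^ (j + 1)) = fun j : ℕ => c⁻¹ * (v j * c⁻¹ ^ j) := by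
      funext j
      ring
    rw [hshift]
    exact hsummable.hasSum.mul_left c⁻¹
  have hlim_zero : Tendsto (fun n : ℕ => u n * c⁻¹ ^ n) atTop (𝓝 0) := by
    refine squeeze_zero_norm (a := fun n => C * ‖c⁻¹‖ ^ n) (fun n => ?_) (by
      simpa only [mul_zero] using
        (tendsto_pow_atTop_nhds_zero_of_lt_one (norm_nonneg _) hw).const_mul C)
    rw [norm_mul, norm_pow]; exact mul_le_mul_of_nonneg_right (hu n) (by positivity)
  have hlim : Tendsto (fun n : ℕ => u n * c⁻¹ ^ n) atTop
      (𝓝 (u 0 + b * (c⁻¹ * ∑' n : ℕ, v n * c⁻¹ ^ n))) := by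
    simp_rw [mul_inv_pow_eq_of_recurrence hrec hc0]
    exact (hsum.tendsto_sum_nat.const_mul b).const_add _
  linear_combination tendsto_nhds_unique hlim hlim_zero

theorem forall_neg_add_eq_zero_iff {w : ℂ} (hw : w ≠ 0) (hu : ∀ m : ℕ, u (-m) = u 0 * w ^ m)
    (hv : ∀ n < 0, v n = 0) : (∀ n < 0, v (n + 1) + u n = 0) ↔ v 0 = 0 ∧ u 0 = 0 := by
  constructor
  · intro h
    have hu0 : u 0 = 0 := by
      have h2 := h (-(2 : ℕ)) (by norm_num)
      rw [hu, hv _ (by norm_num), zero_add] at h2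
      simpa [hw] using h2
    have h1 := h (-(1 : ℕ)) (by norm_num)
    rw [hu, hu0] at h1
    exact ⟨by simpa using h1, hu0⟩
  · rintro ⟨hv0, hu0⟩ n hn
    obtain ⟨m, rfl⟩ := Int.exists_eq_neg_ofNat hn.le
    rw [hu, hu0, zero_mul, add_zero]
    rcases eq_or_lt_of_le (show -(m : ℤ) + 1 ≤ 0 by omega) with h | h
    · rwa [h]
    · exact hv _ h

end Recurrence

section Circle

variable {T : ℝ}

theorem one_sub_mul_fourier_ne_zero {c : ℂ} (hc : ‖c‖ ≠ 1) (θ : AddCircle T) :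
    1 - c * fourier 1 θ ≠ 0 := by
  rw [sub_ne_zero]
  intro h
  apply hc
  simpa [Circle.norm_coe] using (congrArg norm h).symm

def rationalPart (b c : ℂ) (θ : AddCircle T) : ℂ :=
  b * fourier 1 θ / (1 - c * fourier 1 θ)

theorem continuous_rationalPart {b c : ℂ} (hc : ‖c‖ ≠ 1) :
    Continuous (rationalPart (T := T) b c) :=
  (continuous_const.mul (map_continuous _)).div
    (continuous_const.sub (continuous_const.mul (map_continuous _)))
    (one_sub_mul_fourier_ne_zero hc)

variable [Fact (0 < T)]

theorem norm_fourierCoeff_le_integral_norm {E : Type*} [NormedAddCommGroup E] [NormedSpace ℂ E]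
    (f : AddCircle T → E) (n : ℤ) : ‖fourierCoeff f n‖ ≤ ∫ θ, ‖f θ‖ ∂haarAddCircle := by
  refine (norm_integral_le_integral_norm _).trans_eq ?_
  simp only [norm_smul, fourier_apply, Circle.norm_coe, one_mul]

theorem fourierCoeff_fourier_mul (k : ℤ) (f : AddCircle T → ℂ) (n : ℤ) :
    fourierCoeff (fun θ => fourier k θ * f θ) n = fourierCoeff f (n - k) := by
  simp only [fourierCoeff, smul_eq_mul, ← mul_assoc, ← fourier_add]
  ring_nf

variable {b c : ℂ} {f : AddCircle T → ℂ}

theorem MeasureTheory.Integrable.rationalPart_mul (hc : ‖c‖ ≠ 1) (hf : Integrable f haarAddCircle) :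
    Integrable (fun θ => rationalPart b c θ * f θ) haarAddCircle :=
  let r : C(AddCircle T, ℂ) := ⟨_, continuous_rationalPart hc⟩
  hf.bdd_mul r.continuous.aestronglyMeasurable (ae_of_all _ r.norm_coe_le_norm)

theorem fourierCoeff_rationalPart_mul (hc : ‖c‖ ≠ 1) (hf : Integrable f haarAddCircle) (n : ℤ) :
    fourierCoeff (fun θ => rationalPart b c θ * f θ) n =
      c * fourierCoeff (fun θ => rationalPart b c θ * f θ) (n - 1) +
        b * fourierCoeff f (n - 1) := by
  have hA : Integrable (fun θ => c * (fourier 1 θ * (rationalPart b c θ * f θ))) haarAddCircle :=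
    ((hf.rationalPart_mul hc).fourier_smul 1).const_mul c
  have hB : Integrable (fun θ => b * (fourier 1 θ * f θ)) haarAddCircle :=
    (hf.fourier_smul 1).const_mul b
  calc _ = fourierCoeff ((fun θ => c * (fourier 1 θ * (rationalPart b c θ * f θ))) +
        fun θ => b * (fourier 1 θ * f θ)) n := by
        congr 1
        funext θ
        simp only [rationalPart, Pi.add_apply]
        linear_combination
          f θ * div_mul_cancel₀ (b * fourier 1 θ) (one_sub_mul_fourier_ne_zero hc θ)
    _ = _ := by
      rw [fourierCoeff.add hA hB, Pi.add_apply, fourierCoeff.const_mul, fourierCoeff.const_mul,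
        fourierCoeff_fourier_mul, fourierCoeff_fourier_mul]

theorem fourierCoeff_symbol_mul_neg_eq_zero_iff (hc : 1 < ‖c‖) (hb : b ≠ 0)
    (hf : Integrable f haarAddCircle) (hf_neg : ∀ n < 0, fourierCoeff f n = 0) :
    (∀ n < 0, fourierCoeff (fun θ => (fourier (-1) θ + rationalPart b c θ) * f θ) n = 0) ↔
      fourierCoeff f 0 = 0 ∧ ∑' n : ℕ, fourierCoeff f n * c⁻¹ ^ n = 0 := by
  set u := fourierCoeff fun θ => rationalPart b c θ * f θ
  have hc0 : c ≠ 0 := norm_pos_iff.mp (one_pos.trans hc)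
  have hrec : ∀ n, u n = c * u (n - 1) + b * fourierCoeff f (n - 1) :=
    fourierCoeff_rationalPart_mul hc.ne' hf
  have hcoeff : ∀ n, fourierCoeff (fun θ => (fourier (-1) θ + rationalPart b c θ) * f θ) n =
      fourierCoeff f (n + 1) + u n := by
    intro n
    have hA : Integrable (fun θ => fourier (-1) θ * f θ) haarAddCircle := hf.fourier_smul (-1)
    calc _ = fourierCoeff
          ((fun θ => fourier (-1) θ * f θ) + fun θ => rationalPart b c θ * f θ) n := by
          simp only [add_mul]; rfl
      _ = _ := by
        rw [fourierCoeff.add hA (hf.rationalPart_mul hc.ne'), Pi.add_apply,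
          fourierCoeff_fourier_mul, sub_neg_eq_add]
  have hu0 : u 0 = 0 ↔ ∑' n : ℕ, fourierCoeff f n * c⁻¹ ^ n = 0 := by
    rw [apply_zero_eq_of_bounded_recurrence hrec hc (norm_fourierCoeff_le_integral_norm _)
      (norm_fourierCoeff_le_integral_norm f)]
    simp [hb, hc0]
  simp_rw [hcoeff]
  rw [← hu0]
  exact forall_neg_add_eq_zero_iff (inv_ne_zero hc0)
    (apply_neg_eq_of_recurrence hrec hc0 hf_neg) hf_neg

end Circle

theorem Fstar_eq (a β : ℂ) (θ : AddCircle (2 * Real.pi)) :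
    Fstar a β θ = fourier (-1) θ + rationalPart (starRingEnd ℂ β) (starRingEnd ℂ a) θ :=
  rfl

/-- For `F(t) = t + β/(t−a)` with `|a| > 1`, `β ≠ 0`, the kernel of the
Hankel operator `Γ_{F_*}` on `H²` is `{x ∈ H² : x(0) = 0 and x(1/conj a) = 0}`, where the
values of the analytic extension are `x(0) = x̂(0)` and `x(1/conj a) = Σₙ x̂(n)(1/conj a)ⁿ`;
equivalently `Ker Γ_{F_*} = α H²` with `α` the degree-2 Blaschke product vanishing at `0`
and `1/conj a`. -/
theorem kernel_of_hankel_rational_symbol (a β : ℂ) (ha : 1 < ‖a‖) (hβ : β ≠ 0)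
    -- `P` is the orthogonal projection of `L²(𝕋)` onto `H²`:
    (P : L2S →L[ℂ] L2S)
    (hPmem : ∀ f : L2S, P f ∈ Hardy1)
    (hPorth : ∀ f : L2S, ∀ g ∈ Hardy1, ⟪f - P f, g⟫ = 0)
    -- multiplication operator by the symbol `F_*`:
    (MFs : L2S →L[ℂ] L2S)
    (hMFs : ∀ f : L2S, ⇑(MFs f) =ᵐ[haarAddCircle] fun θ => Fstar a β θ * (⇑f) θ)
    (x : L2S) (hx : x ∈ Hardy1) :
    -- `Γ_{F_*} x = (1 − P)(F_* x) = 0` iff `x(0) = 0` and `x(1/conj a) = 0`: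
    MFs x - P (MFs x) = 0 ↔
      (fourierCoeff (⇑x) 0 = 0 ∧
        ∑' n : ℕ, fourierCoeff (⇑x) (n : ℤ) * ((starRingEnd ℂ a)⁻¹) ^ n = 0) := by
  rw [sub_eq_zero_iff_mem_of_orthogonal Hardy1.sub_mem (hPmem _) (hPorth _), Hardy1,
    Set.mem_ofPred_eq, fourierCoeff_congr_ae (hMFs x)]
  simp only [Fstar_eq]
  exact fourierCoeff_symbol_mul_neg_eq_zero_iff (by rwa [RCLike.norm_conj])
    ((map_ne_zero _).mpr hβ) ((Lp.memLp x).integrable one_le_two) hx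
end
end
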